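/- Let E be a directed graph, K a field, and (X, {R_e}, {D_v}, {f_e}) an E-algebraic branching system. Then there exists a K-algebra homomorphism π : L_K(E) → Hom_K(M), where M is the K-module of all functions X → K, satisfying π(e) = S_e, π(e^*) = S_e^*, and π(v) = P_v for all e ∈ E^1 and v ∈ E^0, where S_e(φ) = χ_{R_e}·(φ ∘ f_e^{-1}), S_e^*(φ) = χ_{D_{r(e)}}·(φ ∘ f_e), and P_v(φ) = χ_{D_v}·φ. -/

import Mathlib

open scoped Classical

/-- An E-algebraic branching system for a directed graph with vertices `V`,
edges `E`, range map `r` and source map `s`, on a set (type) `X`. -/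
structure AlgBranchingSystem {V E : Type*} (r s : E → V) (X : Type*) where
  R : E → Set X
  D : V → Set X
  disjoint_R : ∀ ⦃e d : E⦄, e ≠ d → R e ∩ R d = ∅
  disjoint_D : ∀ ⦃u v : V⦄, u ≠ v → D u ∩ D v = ∅
  R_subset : ∀ e : E, R e ⊆ D (s e)
  D_eq_union : ∀ v : V, {e : E | s e = v}.Finite → {e : E | s e = v}.Nonempty →
      D v = ⋃ e ∈ {e : E | s e = v}, R e
  f : E → X → X
  g : E → X → X
  f_mapsTo : ∀ e : E, Set.MapsTo (f e) (D (r e)) (R e)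
  g_mapsTo : ∀ e : E, Set.MapsTo (g e) (R e) (D (r e))
  g_f : ∀ e : E, ∀ x ∈ D (r e), g e (f e x) = x
  f_g : ∀ e : E, ∀ x ∈ R e, f e (g e x) = x

namespace AlgBranchingSystem

variable {V E : Type*} {r s : E → V} {X : Type*} (K : Type*) [Field K]

/-- The operator `P_v : φ ↦ χ_{D_v} · φ` on the module of all functions `X → K`. -/
noncomputable def P (B : AlgBranchingSystem r s X) (v : V) : Module.End K (X → K) where
  toFun φ := (B.D v).indicator φ
  map_add' φ ψ := by
    funext x
    by_cases h : x ∈ B.D v <;> simp [Set.indicator_of_mem, Set.indicator_of_notMem, h]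
  map_smul' c φ := by
    funext x
    by_cases h : x ∈ B.D v <;> simp [Set.indicator_of_mem, Set.indicator_of_notMem, h]

/-- The operator `S_e : φ ↦ χ_{R_e} · (φ ∘ f_e⁻¹)`. -/
noncomputable def S (B : AlgBranchingSystem r s X) (e : E) : Module.End K (X → K) where
  toFun φ := (B.R e).indicator fun x => φ (B.g e x)
  map_add' φ ψ := by
    funext x
    by_cases h : x ∈ B.R e <;> simp [Set.indicator_of_mem, Set.indicator_of_notMem, h]
  map_smul' c φ := by
    funext x
    by_cases h : x ∈ B.R e <;> simp [Set.indicator_of_mem, Set.indicator_of_notMem, h]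

/-- The operator `S_e^* : φ ↦ χ_{D_{r(e)}} · (φ ∘ f_e)`. -/
noncomputable def Sstar (B : AlgBranchingSystem r s X) (e : E) : Module.End K (X → K) where
  toFun φ := (B.D (r e)).indicator fun x => φ (B.f e x)
  map_add' φ ψ := by
    funext x
    by_cases h : x ∈ B.D (r e) <;> simp [Set.indicator_of_mem, Set.indicator_of_notMem, h]
  map_smul' c φ := by
    funext x
    by_cases h : x ∈ B.D (r e) <;> simp [Set.indicator_of_mem, Set.indicator_of_notMem, h]

end AlgBranchingSystem

/-- Generators of the Leavitt path algebra: vertices, edges, and ghost edges. -/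
inductive LeavittGen (V E : Type*) : Type _ where
  | vertex : V → LeavittGen V E
  | edge : E → LeavittGen V E
  | ghost : E → LeavittGen V E

/-- The defining relations of the Leavitt path algebra of the graph `(V, E, r, s)`. -/
inductive LeavittRel (K : Type*) [Field K] {V E : Type*} (r s : E → V) :
    FreeAlgebra K (LeavittGen V E) → FreeAlgebra K (LeavittGen V E) → Prop where
  | vertex_mul (u v : V) : LeavittRel K r s
      (FreeAlgebra.ι K (LeavittGen.vertex u : LeavittGen V E) *
        FreeAlgebra.ι K (LeavittGen.vertex v : LeavittGen V E))
      (if u = v then FreeAlgebra.ι K (LeavittGen.vertex u : LeavittGen V E) else 0)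
  | source_mul_edge (e : E) : LeavittRel K r s
      (FreeAlgebra.ι K (LeavittGen.vertex (s e) : LeavittGen V E) *
        FreeAlgebra.ι K (LeavittGen.edge e : LeavittGen V E))
      (FreeAlgebra.ι K (LeavittGen.edge e : LeavittGen V E))
  | edge_mul_range (e : E) : LeavittRel K r s
      (FreeAlgebra.ι K (LeavittGen.edge e : LeavittGen V E) *
        FreeAlgebra.ι K (LeavittGen.vertex (r e) : LeavittGen V E))
      (FreeAlgebra.ι K (LeavittGen.edge e : LeavittGen V E))
  | range_mul_ghost (e : E) : LeavittRel K r s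
      (FreeAlgebra.ι K (LeavittGen.vertex (r e) : LeavittGen V E) *
        FreeAlgebra.ι K (LeavittGen.ghost e : LeavittGen V E))
      (FreeAlgebra.ι K (LeavittGen.ghost e : LeavittGen V E))
  | ghost_mul_source (e : E) : LeavittRel K r s
      (FreeAlgebra.ι K (LeavittGen.ghost e : LeavittGen V E) *
        FreeAlgebra.ι K (LeavittGen.vertex (s e) : LeavittGen V E))
      (FreeAlgebra.ι K (LeavittGen.ghost e : LeavittGen V E))
  | ghost_mul_edge (e d : E) : LeavittRel K r s
      (FreeAlgebra.ι K (LeavittGen.ghost e : LeavittGen V E) *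
        FreeAlgebra.ι K (LeavittGen.edge d : LeavittGen V E))
      (if e = d then FreeAlgebra.ι K (LeavittGen.vertex (r e) : LeavittGen V E) else 0)
  | cuntz_krieger (v : V) (h : {e : E | s e = v}.Finite) (hne : {e : E | s e = v}.Nonempty) :
      LeavittRel K r s
      (FreeAlgebra.ι K (LeavittGen.vertex v : LeavittGen V E))
      (∑ e ∈ h.toFinset, FreeAlgebra.ι K (LeavittGen.edge e : LeavittGen V E) *
        FreeAlgebra.ι K (LeavittGen.ghost e : LeavittGen V E))

/-- The Leavitt path algebra `L_K(E)` of the graph `(V, E, r, s)`, presented as the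
quotient of the free algebra on the generators by the Leavitt relations. -/
abbrev LeavittAlgebra (K : Type*) [Field K] {V E : Type*} (r s : E → V) :=
  RingQuot (LeavittRel K r s)

/-- The image of a vertex `v ∈ E^0` in the Leavitt path algebra. -/
noncomputable def lpaVert (K : Type*) [Field K] {V E : Type*} (r s : E → V) (v : V) :
    LeavittAlgebra K r s :=
  RingQuot.mkAlgHom K (LeavittRel K r s) (FreeAlgebra.ι K (LeavittGen.vertex v : LeavittGen V E))

/-- The image of an edge `e ∈ E^1` in the Leavitt path algebra. -/
noncomputable def lpaEdge (K : Type*) [Field K] {V E : Type*} (r s : E → V) (e : E) :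
    LeavittAlgebra K r s :=
  RingQuot.mkAlgHom K (LeavittRel K r s) (FreeAlgebra.ι K (LeavittGen.edge e : LeavittGen V E))

/-- The image of a ghost edge `e^*` in the Leavitt path algebra. -/
noncomputable def lpaGhost (K : Type*) [Field K] {V E : Type*} (r s : E → V) (e : E) :
    LeavittAlgebra K r s :=
  RingQuot.mkAlgHom K (LeavittRel K r s) (FreeAlgebra.ι K (LeavittGen.ghost e : LeavittGen V E))

/-! By the universal property of `L_K(E)` as a quotient of the free algebra, it suffices that
`P_v`, `S_e`, `S_e^*` satisfy the Leavitt relations in `End_K(K^X)`. Each relation is an identity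
between operators of the form `φ ↦ χ_A · (φ ∘ h)`, and follows from how `f_e` and `f_e⁻¹` move the
sets `R_e`, `D_v`. For Cuntz–Krieger, `S_e S_e^*` is multiplication by `χ_{R_e}`, and the `R_e`
with `s(e) = v` partition `D_v`. -/

structure IsLeavittFamily {V E : Type*} (r s : E → V) {A : Type*} [Semiring A]
    (p : V → A) (a b : E → A) : Prop where
  p_mul_p : ∀ u v, p u * p v = if u = v then p u else 0
  p_mul_a : ∀ e, p (s e) * a e = a e
  a_mul_p : ∀ e, a e * p (r e) = a e
  p_mul_b : ∀ e, p (r e) * b e = b e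
  b_mul_p : ∀ e, b e * p (s e) = b e
  b_mul_a : ∀ e d, b e * a d = if e = d then p (r e) else 0
  p_eq_sum_a_mul_b : ∀ v (h : {e | s e = v}.Finite), {e | s e = v}.Nonempty →
    p v = ∑ e ∈ h.toFinset, a e * b e

def LeavittGen.elim {V E A : Type*} (p : V → A) (a b : E → A) : LeavittGen V E → A
  | vertex v => p v
  | edge e => a e
  | ghost e => b e

theorem IsLeavittFamily.exists_algHom {V E : Type*} {r s : E → V} (K : Type*) [Field K]
    {A : Type*} [Semiring A] [Algebra K A] {p : V → A} {a b : E → A}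
    (h : IsLeavittFamily r s p a b) :
    ∃ π : LeavittAlgebra K r s →ₐ[K] A,
      (∀ v, π (lpaVert K r s v) = p v) ∧ (∀ e, π (lpaEdge K r s e) = a e) ∧
      (∀ e, π (lpaGhost K r s e) = b e) := by
  let F := FreeAlgebra.lift K (LeavittGen.elim p a b)
  have hF : ∀ ⦃x y⦄, LeavittRel K r s x y → F x = F y := by
    intro x y hxy
    cases hxy <;>
      simp only [F, map_mul, map_sum, apply_ite F, map_zero, FreeAlgebra.lift_ι_apply,
        LeavittGen.elim]
    · exact h.p_mul_p _ _
    · exact h.p_mul_a _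
    · exact h.a_mul_p _
    · exact h.p_mul_b _
    · exact h.b_mul_p _
    · exact h.b_mul_a _ _
    · exact h.p_eq_sum_a_mul_b _ ‹_› ‹_›
  refine ⟨RingQuot.liftAlgHom K ⟨F, hF⟩, fun v => ?_, fun e => ?_, fun e => ?_⟩ <;>
    simp [lpaVert, lpaEdge, lpaGhost, F, LeavittGen.elim]

namespace Set

variable {α β M : Type*} [Zero M] {s : Set α} {t u : Set β} {g : α → β} {φ : β → M}

theorem indicator_comp_indicator_of_mapsTo (h : MapsTo g s t) :
    s.indicator (fun x => t.indicator φ (g x)) = s.indicator fun x => φ (g x) :=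
  indicator_congr fun _ hx => indicator_of_mem (h hx) φ

theorem indicator_comp_indicator_eq_zero_of_mapsTo (h : MapsTo g s t) (htu : Disjoint t u) :
    s.indicator (fun x => u.indicator φ (g x)) = 0 := by
  funext x
  exact indicator_apply_eq_zero.mpr fun hx => indicator_of_notMem (htu.notMem_of_mem_left (h hx)) φ

end Set

namespace AlgBranchingSystem

variable {V E : Type*} {r s : E → V} {X : Type*} {K : Type*} [Field K]
  (B : AlgBranchingSystem r s X)

@[simp] theorem P_apply (v : V) (φ : X → K) : B.P K v φ = (B.D v).indicator φ := rfl

@[simp] theorem S_apply (e : E) (φ : X → K) :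
    B.S K e φ = (B.R e).indicator fun x => φ (B.g e x) := rfl

@[simp] theorem Sstar_apply (e : E) (φ : X → K) :
    B.Sstar K e φ = (B.D (r e)).indicator fun x => φ (B.f e x) := rfl

theorem disjoint_D_of_ne {u v : V} (h : u ≠ v) : Disjoint (B.D u) (B.D v) :=
  Set.disjoint_iff_inter_eq_empty.mpr (B.disjoint_D h)

theorem disjoint_R_of_ne {e d : E} (h : e ≠ d) : Disjoint (B.R e) (B.R d) :=
  Set.disjoint_iff_inter_eq_empty.mpr (B.disjoint_R h)

theorem P_mul_P (u v : V) : B.P K u * B.P K v = if u = v then B.P K u else 0 := by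
  ext φ : 1
  split_ifs with h
  · simp [h, Set.indicator_indicator]
  · simp only [Module.End.mul_apply, P_apply, Set.indicator_indicator,
      (B.disjoint_D_of_ne h).inter_eq, Set.indicator_empty', LinearMap.zero_apply]

theorem P_mul_S (e : E) : B.P K (s e) * B.S K e = B.S K e := by
  ext φ : 1
  simp [Set.indicator_indicator, Set.inter_eq_right.mpr (B.R_subset e)]

theorem S_mul_P (e : E) : B.S K e * B.P K (r e) = B.S K e := by
  ext φ : 1
  simp [Set.indicator_comp_indicator_of_mapsTo (B.g_mapsTo e)]

theorem P_mul_Sstar (e : E) : B.P K (r e) * B.Sstar K e = B.Sstar K e := by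
  ext φ : 1
  simp [Set.indicator_indicator]

theorem Sstar_mul_P (e : E) : B.Sstar K e * B.P K (s e) = B.Sstar K e := by
  ext φ : 1
  simp [Set.indicator_comp_indicator_of_mapsTo ((B.f_mapsTo e).mono_right (B.R_subset e))]

theorem Sstar_mul_S (e d : E) :
    B.Sstar K e * B.S K d = if e = d then B.P K (r e) else 0 := by
  ext φ : 1
  split_ifs with h
  · subst h
    simp only [Module.End.mul_apply, S_apply, Sstar_apply, P_apply,
      Set.indicator_comp_indicator_of_mapsTo (B.f_mapsTo e)]
    exact Set.indicator_congr fun x hx => congrArg φ (B.g_f e x hx)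
  · simp [Set.indicator_comp_indicator_eq_zero_of_mapsTo (B.f_mapsTo e) (B.disjoint_R_of_ne h)]

theorem S_mul_Sstar_apply (e : E) (φ : X → K) :
    (B.S K e * B.Sstar K e) φ = (B.R e).indicator φ := by
  simp only [Module.End.mul_apply, S_apply, Sstar_apply,
    Set.indicator_comp_indicator_of_mapsTo (B.g_mapsTo e)]
  exact Set.indicator_congr fun x hx => congrArg φ (B.f_g e x hx)

theorem P_eq_sum_S_mul_Sstar (v : V) (h : {e : E | s e = v}.Finite)
    (hne : {e : E | s e = v}.Nonempty) :
    B.P K v = ∑ e ∈ h.toFinset, B.S K e * B.Sstar K e := by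
  have hD : B.D v = ⋃ e ∈ h.toFinset, B.R e := by
    rw [B.D_eq_union v h hne, ← Finset.set_biUnion_coe, h.coe_toFinset]
  ext φ x
  have hdisj : (h.toFinset : Set E).PairwiseDisjoint B.R := fun e _ d _ hed =>
    B.disjoint_R_of_ne hed
  rw [P_apply, hD, Finset.indicator_biUnion_apply _ _ hdisj, LinearMap.sum_apply, Finset.sum_apply]
  simp only [S_mul_Sstar_apply]

variable (K) in
theorem isLeavittFamily : IsLeavittFamily r s (B.P K) (B.S K) (B.Sstar K) where
  p_mul_p := B.P_mul_P
  p_mul_a := B.P_mul_S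
  a_mul_p := B.S_mul_P
  p_mul_b := B.P_mul_Sstar
  b_mul_p := B.Sstar_mul_P
  b_mul_a := B.Sstar_mul_S
  p_eq_sum_a_mul_b := B.P_eq_sum_S_mul_Sstar

end AlgBranchingSystem

/-- every E-algebraic branching system induces a representation
`π : L_K(E) → Hom_K(M)` with `π(v) = P_v`, `π(e) = S_e` and `π(e^*) = S_e^*`. -/
theorem exists_induced_representation {V E : Type*} (r s : E → V) {X : Type*}
    (K : Type*) [Field K] (B : AlgBranchingSystem r s X) :
    ∃ π : LeavittAlgebra K r s →ₐ[K] Module.End K (X → K),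
      (∀ v : V, π (lpaVert K r s v) = B.P K v) ∧
      (∀ e : E, π (lpaEdge K r s e) = B.S K e) ∧
      (∀ e : E, π (lpaGhost K r s e) = B.Sstar K e) :=
  (B.isLeavittFamily K).exists_algHom K
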